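/- Let δ > 0 and β(t) = e^{-δt}. For any φ ∈ L²(0, t*) with t* > 0, the double integral ∫₀^{t*} ∫₀^{t} β(t−s) φ(s) φ(t) ds dt is nonnegative. -/

import Mathlib

/-!
With `g s = exp (δ s) φ s` and `F` its primitive vanishing at `0`, the inner integral equals
`exp (-δ t) φ t F t = exp (-2δ t) F t F' t`. Integrating `(F²)'` by parts against the decreasing
weight `exp (-2δ t)` leaves `exp (-2δ t*) F(t*)² / 2 + δ ∫ exp (-2δ t) F t²`, which is nonnegative.
-/

open MeasureTheory intervalIntegral Set

theorem integral_mul_primitive_mul_nonneg {g w : ℝ → ℝ} {a b : ℝ} (hab : a ≤ b)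
    (hg : IntervalIntegrable g volume a b) (hw : AbsolutelyContinuousOnInterval w a b)
    (hwb : 0 ≤ w b) (hw' : ∀ᵐ x, x ∈ Icc a b → deriv w x ≤ 0) :
    0 ≤ ∫ x in a..b, w x * ((∫ y in a..x, g y) * g x) := by
  set F : ℝ → ℝ := fun x => ∫ y in a..x, g y
  have hF : AbsolutelyContinuousOnInterval F a b :=
    hg.absolutelyContinuousOnInterval_intervalIntegral left_mem_uIcc
  have hderiv : ∀ᵐ x, x ∈ uIoc a b → w x * deriv (F * F) x = 2 * (w x * (F x * g x)) := by
    filter_upwards [hg.ae_hasDerivAt_integral] with x hx hxab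
    have hFx := hx (uIoc_subset_uIcc hxab) a left_mem_uIcc
    rw [(hFx.mul hFx).deriv]
    ring
  have hparts := hw.integral_mul_deriv_eq_deriv_mul (hF.mul hF)
  rw [integral_congr_ae hderiv, intervalIntegral.integral_const_mul] at hparts
  have hrest : 0 ≤ ∫ x in a..b, -(deriv w x * (F * F) x) := by
    refine integral_nonneg_of_ae_restrict hab ?_
    rw [Filter.EventuallyLE, ae_restrict_iff' measurableSet_Icc]
    filter_upwards [hw'] with x hx hxab
    exact neg_nonneg.2 (mul_nonpos_of_nonpos_of_nonneg (hx hxab) (mul_self_nonneg _))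
  rw [intervalIntegral.integral_neg] at hrest
  have hFa : F a = 0 := integral_same
  rw [Pi.mul_apply, Pi.mul_apply, hFa] at hparts
  nlinarith [mul_nonneg hwb (mul_self_nonneg (F b))]

theorem integral_exp_kernel_eq_mul_primitive (δ t : ℝ) (φ : ℝ → ℝ) :
    ∫ s in (0:ℝ)..t, Real.exp (-δ * (t - s)) * φ s * φ t =
      Real.exp (-(2 * δ) * t) *
        ((∫ s in (0:ℝ)..t, Real.exp (δ * s) * φ s) * (Real.exp (δ * t) * φ t)) := by
  have hkernel : ∀ s, Real.exp (-δ * (t - s)) * φ s * φ t =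
      Real.exp (-(2 * δ) * t) * (Real.exp (δ * t) * φ t) * (Real.exp (δ * s) * φ s) := by
    intro s
    have hexp : Real.exp (-δ * (t - s)) =
        Real.exp (-(2 * δ) * t) * Real.exp (δ * t) * Real.exp (δ * s) := by
      rw [← Real.exp_add, ← Real.exp_add]
      ring_nf
    rw [hexp]
    ring
  simp only [hkernel, intervalIntegral.integral_const_mul]
  ring

theorem double_integral_exp_kernel_nonneg
    (δ : ℝ) (hδ : 0 < δ) (tstar : ℝ) (htstar : 0 < tstar)
    (φ : ℝ → ℝ)
    (hφ : MemLp φ 2 (volume.restrict (Set.Ioc (0:ℝ) tstar))) :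
    0 ≤ ∫ t in (0:ℝ)..tstar, ∫ s in (0:ℝ)..t,
        Real.exp (-δ * (t - s)) * φ s * φ t := by
  have hφint : IntervalIntegrable φ volume 0 tstar :=
    (intervalIntegrable_iff_integrableOn_Ioc_of_le htstar.le).2 (hφ.integrable one_le_two)
  have hg : IntervalIntegrable (fun s => Real.exp (δ * s) * φ s) volume 0 tstar :=
    hφint.continuousOn_mul (by fun_prop)
  have hw : AbsolutelyContinuousOnInterval (fun t => Real.exp (-(2 * δ) * t)) 0 tstar :=
    ContDiffOn.absolutelyContinuousOnInterval (by fun_prop)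
  have hw' : ∀ᵐ t, t ∈ Icc 0 tstar → deriv (fun t => Real.exp (-(2 * δ) * t)) t ≤ 0 :=
    Filter.Eventually.of_forall fun t _ =>
      Antitone.deriv_nonpos fun x y hxy => Real.exp_le_exp.2 (by nlinarith)
  simp only [integral_exp_kernel_eq_mul_primitive]
  exact integral_mul_primitive_mul_nonneg htstar.le hg hw (Real.exp_pos _).le hw'
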